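/- arXiv:2502.11445 — 3 statements merged into one kernel-verified Lean document; each statement's English description precedes it below -/
import Mathlib

section
/- Let t₀ > 0, ε > 0 and r > 0. Suppose A ⊆ (0, t₀) is a Lebesgue-measurable set such that for every x ∈ (0, t₀) one has vol(A ∩ (x − r, x + r)) < ε · vol((0, t₀) ∩ (x − r, x + r)), where vol denotes one-dimensional Lebesgue measure. Then vol(A) ≤ 2 ε t₀. -/
open MeasureTheory Set

/-!
Double counting: the measure of `{(x, y) ∈ (0, t₀) × A : |x - y| < r}` computed by Fubini in
both orders. Each `y ∈ A ⊆ (0, t₀)` has at least `m := min r t₀` of `(0, t₀)` within distance `r`,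
while by hypothesis each `x ∈ (0, t₀)` sees less than `ε · 2m` of `A`; hence
`m · vol A ≤ 2 ε m t₀`.
-/

section DoubleCounting

variable {α : Type*} [PseudoMetricSpace α] [MeasurableSpace α] [OpensMeasurableSpace α]
  [SecondCountableTopology α]

theorem lintegral_measure_inter_ball_comm (μ ν : Measure α) [SFinite μ] [SFinite ν]
    {A B : Set α} (hA : MeasurableSet A) (hB : MeasurableSet B) (r : ℝ) :
    ∫⁻ x in B, ν (A ∩ Metric.ball x r) ∂μ = ∫⁻ y in A, μ (B ∩ Metric.ball y r) ∂ν := by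
  set S : Set (α × α) := B ×ˢ A ∩ {p | dist p.1 p.2 < r}
  have hS : MeasurableSet S :=
    (hB.prod hA).inter (measurableSet_lt measurable_dist measurable_const)
  calc ∫⁻ x in B, ν (A ∩ Metric.ball x r) ∂μ = μ.prod ν S := by
        rw [Measure.prod_apply hS, ← lintegral_indicator hB]
        congr 1 with x
        by_cases hx : x ∈ B <;> simp [S, hx, Metric.mem_ball, dist_comm, Set.inter_def]
    _ = ∫⁻ y in A, μ (B ∩ Metric.ball y r) ∂ν := by
        rw [Measure.prod_apply_symm hS, ← lintegral_indicator hA]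
        congr 1 with y
        by_cases hy : y ∈ A <;> simp [S, hy, Metric.mem_ball, Set.inter_def]

end DoubleCounting

theorem volume_Ioo_inter_Ioo_le (a b x r : ℝ) (hab : a ≤ b) :
    volume (Ioo a b ∩ Ioo (x - r) (x + r)) ≤ ENNReal.ofReal (2 * min r (b - a)) := by
  rw [Ioo_inter_Ioo, Real.volume_Ioo]
  refine ENNReal.ofReal_le_ofReal ?_
  rcases min_cases r (b - a) with ⟨h, -⟩ | ⟨h, -⟩ <;> rw [h] <;>
    linarith [min_le_left b (x + r), min_le_right b (x + r), le_max_left a (x - r),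
      le_max_right a (x - r)]

theorem ofReal_min_le_volume_Ioo_inter_Ioo {a b y r : ℝ} (hy : y ∈ Ioo a b) (hr : 0 ≤ r) :
    ENNReal.ofReal (min r (b - a)) ≤ volume (Ioo a b ∩ Ioo (y - r) (y + r)) := by
  rw [Ioo_inter_Ioo, Real.volume_Ioo]
  refine ENNReal.ofReal_le_ofReal ?_
  rcases max_cases a (y - r) with ⟨h₁, -⟩ | ⟨h₁, -⟩ <;>
    rcases min_cases b (y + r) with ⟨h₂, -⟩ | ⟨h₂, -⟩ <;> rw [h₁, h₂] <;>
    linarith [min_le_left r (b - a), min_le_right r (b - a), hy.1, hy.2]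

theorem stmt_0_general (t₀ ε r : ℝ) (ht₀ : 0 < t₀) (hr : 0 < r)
    (A : Set ℝ) (hA : MeasurableSet A) (hA_sub : A ⊆ Ioo 0 t₀)
    (h : ∀ x ∈ Ioo (0:ℝ) t₀,
      volume (A ∩ Ioo (x - r) (x + r)) <
        ENNReal.ofReal ε * volume (Ioo (0:ℝ) t₀ ∩ Ioo (x - r) (x + r))) :
    volume A ≤ ENNReal.ofReal (2 * ε * t₀) := by
  set m := min r t₀
  have hm : 0 < m := lt_min hr ht₀
  have key : volume A * ENNReal.ofReal m ≤ ENNReal.ofReal (2 * ε * t₀) * ENNReal.ofReal m :=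
    calc volume A * ENNReal.ofReal m = ∫⁻ _ in A, ENNReal.ofReal m := by
          rw [setLIntegral_const, mul_comm]
      _ ≤ ∫⁻ y in A, volume (Ioo 0 t₀ ∩ Ioo (y - r) (y + r)) :=
          setLIntegral_mono' hA fun y hy ↦ by
            simpa [m] using ofReal_min_le_volume_Ioo_inter_Ioo (hA_sub hy) hr.le
      _ = ∫⁻ x in Ioo 0 t₀, volume (A ∩ Ioo (x - r) (x + r)) := by
          simpa only [Real.ball_eq_Ioo] using
            (lintegral_measure_inter_ball_comm volume volume hA measurableSet_Ioo r).symm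
      _ ≤ ∫⁻ _ in Ioo 0 t₀, ENNReal.ofReal ε * ENNReal.ofReal (2 * m) :=
          setLIntegral_mono' measurableSet_Ioo fun x hx ↦ (h x hx).le.trans <| by
            gcongr
            simpa [m] using volume_Ioo_inter_Ioo_le 0 t₀ x r ht₀.le
      _ = ENNReal.ofReal (2 * ε * t₀) * ENNReal.ofReal m := by
          rw [setLIntegral_const, Real.volume_Ioo, sub_zero, mul_assoc,
            ← ENNReal.ofReal_mul' ht₀.le, ← ENNReal.ofReal_mul' (by positivity),
            ← ENNReal.ofReal_mul' hm.le]
          ring_nf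
  exact (ENNReal.mul_le_mul_iff_left (by simpa using hm) ENNReal.ofReal_ne_top).mp key

/-- Measure-theoretic covering lemma (Lemma 6.4): if a measurable set
`A ⊆ (0, t₀)` occupies less than an `ε` fraction of every window
`(x − r, x + r)` relative to `(0, t₀)`, then `vol(A) ≤ 2 ε t₀`. -/
theorem stmt_0 (t₀ ε r : ℝ) (ht₀ : 0 < t₀) (hε : 0 < ε) (hr : 0 < r)
    (A : Set ℝ) (hA : MeasurableSet A) (hA_sub : A ⊆ Ioo 0 t₀)
    (h : ∀ x ∈ Ioo (0:ℝ) t₀,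
      volume (A ∩ Ioo (x - r) (x + r)) <
        ENNReal.ofReal ε * volume (Ioo (0:ℝ) t₀ ∩ Ioo (x - r) (x + r))) :
    volume A ≤ ENNReal.ofReal (2 * ε * t₀) :=
  stmt_0_general t₀ ε r ht₀ hr A hA hA_sub h
end

section
/- Let H be a Hilbert space with a Hilbert (orthonormal) basis (u_k)_{k ∈ ℕ}, let (E_k)_{k ∈ ℕ} be real numbers, let v ∈ H with ‖v‖ = 1, let μ ∈ ℝ and 0 < ε < δ, and suppose Σ_k (E_k − μ)² |⟨v, u_k⟩|² ≤ ε². Assume moreover that the set S = { k : |E_k − μ| ≤ δ } is finite and nonempty, with cardinality N. Then max_{k ∈ S} |⟨v, u_k⟩|² ≥ (1 − ε²/δ²) / N. -/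
/-!
Parseval gives `Σ_k |⟪v, u_k⟫|² = 1`. Outside the window `(E_k − μ)² > δ²`, so by a Markov-type
estimate the mass of `v` outside the window is at most `ε²/δ²`; the `N` coefficients inside the
window therefore carry mass at least `1 − ε²/δ²`, and the largest is at least their average.
-/

open scoped InnerProductSpace

open Finset

theorem HilbertBasis.hasSum_norm_inner_sq {ι 𝕜 E : Type*} [RCLike 𝕜] [NormedAddCommGroup E]
    [InnerProductSpace 𝕜 E] (b : HilbertBasis ι 𝕜 E) (x : E) :
    HasSum (fun i => ‖⟪x, b i⟫_𝕜‖ ^ 2) (‖x‖ ^ 2) := by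
  have h := b.hasSum_inner_mul_inner x x
  simp only [← inner_conj_symm (b _) x, RCLike.mul_conj, inner_self_eq_norm_sq_to_K] at h
  exact_mod_cast h

theorem mul_tsum_compl_le_tsum_mul {ι : Type*} {g w : ι → ℝ} {s : Set ι} {t : ℝ}
    (hg : ∀ i, 0 ≤ g i) (hw : ∀ i, 0 ≤ w i) (hg_sum : Summable g)
    (hwg_sum : Summable fun i => w i * g i) (ht : ∀ i ∉ s, t ≤ w i) :
    t * ∑' i : ↥sᶜ, g i ≤ ∑' i, w i * g i :=
  calc t * ∑' i : ↥sᶜ, g i = ∑' i : ↥sᶜ, t * g i := tsum_mul_left.symm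
    _ ≤ ∑' i : ↥sᶜ, w i * g i :=
        (hg_sum.subtype _).mul_left t |>.tsum_le_tsum
          (fun i => mul_le_mul_of_nonneg_right (ht i i.2) (hg i)) (hwg_sum.subtype _)
    _ ≤ ∑' i, w i * g i :=
        hwg_sum.tsum_subtype_le _ _ fun i => mul_nonneg (hw i) (hg i)

theorem Finset.exists_div_card_le_of_le_sum {ι K : Type*} [Field K] [LinearOrder K]
    [IsStrictOrderedRing K] {s : Finset ι} (hs : s.Nonempty) {f : ι → K} {a : K}
    (h : a ≤ ∑ i ∈ s, f i) : ∃ i ∈ s, a / #s ≤ f i :=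
  exists_le_of_le_expect hs <| by
    rw [expect_eq_sum_div_card]
    gcongr

theorem stmt_10_general {H : Type*} [NormedAddCommGroup H] [InnerProductSpace ℂ H]
    (u : HilbertBasis ℕ ℂ H) (E : ℕ → ℝ) (v : H) (hv : ‖v‖ = 1)
    (μ ε δ : ℝ) (hε : 0 < ε) (hεδ : ε < δ)
    (hsum : Summable fun k : ℕ => (E k - μ) ^ 2 * ‖⟪v, u k⟫_ℂ‖ ^ 2)
    (hbound : (∑' k : ℕ, (E k - μ) ^ 2 * ‖⟪v, u k⟫_ℂ‖ ^ 2) ≤ ε ^ 2)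
    (hfin : {k : ℕ | |E k - μ| ≤ δ}.Finite)
    (hne : {k : ℕ | |E k - μ| ≤ δ}.Nonempty) :
    ∃ k ∈ {k : ℕ | |E k - μ| ≤ δ},
      (1 - ε ^ 2 / δ ^ 2) / (hfin.toFinset.card : ℝ) ≤ ‖⟪v, u k⟫_ℂ‖ ^ 2 := by
  have hδ : 0 < δ := hε.trans hεδ
  have hparseval := u.hasSum_norm_inner_sq v
  rw [hv, one_pow] at hparseval
  have houtside : δ ^ 2 * ∑' k : ↥(↑hfin.toFinset : Set ℕ)ᶜ, ‖⟪v, u k⟫_ℂ‖ ^ 2 ≤ ε ^ 2 := by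
    refine (mul_tsum_compl_le_tsum_mul (fun _ => by positivity) (fun _ => sq_nonneg _)
      hparseval.summable hsum fun k hk => ?_).trans hbound
    rw [Set.Finite.coe_toFinset, Set.mem_ofPred_eq, not_le] at hk
    exact sq_le_sq.mpr ((abs_of_pos hδ).trans_le hk.le)
  have hinside : 1 - ε ^ 2 / δ ^ 2 ≤ ∑ k ∈ hfin.toFinset, ‖⟪v, u k⟫_ℂ‖ ^ 2 := by
    have hsplit := hparseval.summable.sum_add_tsum_compl (s := hfin.toFinset)
    rw [hparseval.tsum_eq] at hsplit
    linarith [(le_div_iff₀' (by positivity)).mpr houtside]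
  obtain ⟨k, hk, hle⟩ := exists_div_card_le_of_le_sum (hfin.toFinset_nonempty.mpr hne) hinside
  exact ⟨k, hfin.mem_toFinset.mp hk, hle⟩

/-- Pigeonhole bound (Lemma 4.6 of the paper): if the energy window
`[μ − δ, μ + δ]` contains exactly `N` eigenvalues and the quasimode `v`
satisfies `Σ_k (E_k − μ)² |⟨v, u_k⟩|² ≤ ε²` with `ε < δ`, then some
eigenfunction in the window satisfies `|⟨v, u_k⟩|² ≥ (1 − ε²/δ²)/N`. -/
theorem stmt_10 {H : Type*} [NormedAddCommGroup H] [InnerProductSpace ℂ H]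
    [CompleteSpace H]
    (u : HilbertBasis ℕ ℂ H) (E : ℕ → ℝ) (v : H) (hv : ‖v‖ = 1)
    (μ ε δ : ℝ) (hε : 0 < ε) (hεδ : ε < δ)
    (hsum : Summable fun k : ℕ => (E k - μ) ^ 2 * ‖⟪v, u k⟫_ℂ‖ ^ 2)
    (hbound : (∑' k : ℕ, (E k - μ) ^ 2 * ‖⟪v, u k⟫_ℂ‖ ^ 2) ≤ ε ^ 2)
    (hfin : {k : ℕ | |E k - μ| ≤ δ}.Finite)
    (hne : {k : ℕ | |E k - μ| ≤ δ}.Nonempty) :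
    ∃ k ∈ {k : ℕ | |E k - μ| ≤ δ},
      (1 - ε ^ 2 / δ ^ 2) / (hfin.toFinset.card : ℝ) ≤ ‖⟪v, u k⟫_ℂ‖ ^ 2 :=
  stmt_10_general u E v hv μ ε δ hε hεδ hsum hbound hfin hne
end

section
/- Let t* ∈ ℝ, r > 0, a > 0, M ≥ 0 and ε > 0, set J = [t* − r, t* + r], and let F : J → ℝ be a C² function with |F''(t)| ≤ M for all t ∈ J, |F'(t*)| ≥ a, |F(t*)| < ε, and r ≤ a / (2M) (this last condition being vacuous if M = 0). Then the Lebesgue measure of the set { t ∈ J : |F(t)| < ε } is at most 8 ε / a. -/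
open MeasureTheory Set

/-!
On `J`, the bound `|F''| ≤ M` and `r ≤ a / (2M)` keep `F'` within `a / 2` of `F'(t*)`, so
`F` stays transversal on all of `J`: `|F t - F t*| ≥ (a / 2) |t - t*|`. Hence `|F t| < ε`
forces `|t - t*| < 4ε / a`, and the sublevel set lies in an interval of length `8ε / a`.
-/

theorem Convex.mul_abs_sub_le_abs_image_sub {s : Set ℝ} (hs : Convex ℝ s) {f f' : ℝ → ℝ}
    (hf : ∀ x ∈ s, HasDerivWithinAt f (f' x) s x) {c δ : ℝ} (hf' : ∀ x ∈ s, |f' x - c| ≤ δ)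
    {x y : ℝ} (hx : x ∈ s) (hy : y ∈ s) :
    (|c| - δ) * |y - x| ≤ |f y - f x| := by
  have hlin : |f y - f x - c * (y - x)| ≤ δ * |y - x| := by
    have hg : ∀ z ∈ s, HasDerivWithinAt (fun z => f z - c * z) (f' z - c) s z := fun z hz =>
      (hf z hz).sub (by simpa using (hasDerivWithinAt_id z s).const_mul c)
    have := hs.norm_image_sub_le_of_norm_hasDerivWithin_le hg hf' hx hy
    simp only [Real.norm_eq_abs] at this
    convert this using 2
    ring
  have htri := abs_sub (f y - f x) (f y - f x - c * (y - x))
  rw [sub_sub_cancel, abs_mul] at htri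
  nlinarith

theorem volume_sublevel_le_of_mul_abs_sub_le {s : Set ℝ} {F : ℝ → ℝ} {t₀ κ ε : ℝ} (hκ : 0 < κ)
    (hF : ∀ t ∈ s, κ * |t - t₀| ≤ |F t - F t₀|) (hF₀ : |F t₀| ≤ ε) :
    volume {t ∈ s | |F t| < ε} ≤ ENNReal.ofReal (4 * ε / κ) := by
  have hsub : {t ∈ s | |F t| < ε} ⊆ Metric.closedBall t₀ (2 * ε / κ) := by
    rintro t ⟨hts, hFt⟩
    rw [Metric.mem_closedBall, Real.dist_eq, le_div_iff₀ hκ]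
    linarith [hF t hts, abs_sub (F t) (F t₀)]
  calc volume {t ∈ s | |F t| < ε}
      ≤ volume (Metric.closedBall t₀ (2 * ε / κ)) := measure_mono hsub
    _ = ENNReal.ofReal (4 * ε / κ) := by rw [Real.volume_closedBall]; ring_nf

theorem stmt_12_general (tstar r a M ε : ℝ) (hr : 0 < r) (ha : 0 < a) (hM : 0 ≤ M)
    (F : ℝ → ℝ)
    (hF : ContDiffOn ℝ 2 F (Icc (tstar - r) (tstar + r)))
    (hF'' : ∀ t ∈ Icc (tstar - r) (tstar + r),
      |derivWithin (derivWithin F (Icc (tstar - r) (tstar + r)))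
        (Icc (tstar - r) (tstar + r)) t| ≤ M)
    (hF' : a ≤ |derivWithin F (Icc (tstar - r) (tstar + r)) tstar|)
    (hF0 : |F tstar| < ε)
    (hrM : M = 0 ∨ r ≤ a / (2 * M)) :
    volume {t ∈ Icc (tstar - r) (tstar + r) | |F t| < ε} ≤
      ENNReal.ofReal (8 * ε / a) := by
  set J := Icc (tstar - r) (tstar + r)
  have htstar : tstar ∈ J := ⟨by linarith, by linarith⟩
  have hMr : M * r ≤ a / 2 := by
    rcases hrM with hM0 | hrM
    · rw [hM0, zero_mul]; positivity
    · rcases hM.eq_or_lt with hM0 | hMpos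
      · rw [← hM0, zero_mul]; positivity
      · calc M * r ≤ M * (a / (2 * M)) := by gcongr
          _ = a / 2 := by field_simp
  have hF'_near : ∀ t ∈ J, |derivWithin F J t - derivWithin F J tstar| ≤ a / 2 := by
    intro t ht
    have hF'_diff : DifferentiableOn ℝ (derivWithin F J) J :=
      (hF.derivWithin (m := 1) (uniqueDiffOn_Icc (by linarith)) (by norm_num)).differentiableOn
        (by norm_num)
    calc |derivWithin F J t - derivWithin F J tstar|
        ≤ M * |t - tstar| :=
          (convex_Icc _ _).norm_image_sub_le_of_norm_derivWithin_le hF'_diff hF'' htstar ht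
      _ ≤ M * r := by gcongr; exact abs_sub_le_iff.2 ⟨by linarith [ht.2], by linarith [ht.1]⟩
      _ ≤ a / 2 := hMr
  have hlower : ∀ t ∈ J, a / 2 * |t - tstar| ≤ |F t - F tstar| := by
    intro t ht
    calc a / 2 * |t - tstar| ≤ (|derivWithin F J tstar| - a / 2) * |t - tstar| := by
          gcongr; linarith
      _ ≤ |F t - F tstar| :=
          (convex_Icc _ _).mul_abs_sub_le_abs_image_sub
            (fun x hx => ((hF.differentiableOn (by norm_num)) x hx).hasDerivWithinAt)
            hF'_near htstar ht
  calc volume {t ∈ J | |F t| < ε} ≤ ENNReal.ofReal (4 * ε / (a / 2)) :=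
        volume_sublevel_le_of_mul_abs_sub_le (half_pos ha) hlower hF0.le
    _ = ENNReal.ofReal (8 * ε / a) := by congr 1; field_simp; ring

/-- Transversality / sublevel-set measure estimate underlying Proposition 4.4:
if `F` is C² on `J = [t* − r, t* + r]` with `|F''| ≤ M`, `|F'(t*)| ≥ a`,
`|F(t*)| < ε` and `r ≤ a/(2M)` (vacuous for `M = 0`), then
`vol{t ∈ J : |F(t)| < ε} ≤ 8 ε / a`. -/
theorem stmt_12 (tstar r a M ε : ℝ) (hr : 0 < r) (ha : 0 < a) (hM : 0 ≤ M)
    (hε : 0 < ε) (F : ℝ → ℝ)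
    (hF : ContDiffOn ℝ 2 F (Icc (tstar - r) (tstar + r)))
    (hF'' : ∀ t ∈ Icc (tstar - r) (tstar + r),
      |derivWithin (derivWithin F (Icc (tstar - r) (tstar + r)))
        (Icc (tstar - r) (tstar + r)) t| ≤ M)
    (hF' : a ≤ |derivWithin F (Icc (tstar - r) (tstar + r)) tstar|)
    (hF0 : |F tstar| < ε)
    (hrM : M = 0 ∨ r ≤ a / (2 * M)) :
    volume {t ∈ Icc (tstar - r) (tstar + r) | |F t| < ε} ≤
      ENNReal.ofReal (8 * ε / a) :=
  stmt_12_general tstar r a M ε hr ha hM F hF hF'' hF' hF0 hrM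
end
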